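/- Let α, β, k be real numbers with α > 0, β > −1 and 0 < k < β + 1, and let s₁₁, s₁₂, s₂₁, s₂₂ be real numbers such that the matrix α₀ = [[s₁₁, s₁₂], [s₂₁, s₂₂]] is invertible. Then the matrix M = α₀^{−1}μ₀ − μ₋₁ is symmetric if and only if s₁₂ = ((β−k+1)(α+β+3)/((α+1)(k+1))) · s₂₁. -/
import Mathlib


open Matrix

/-- The zeroth moment `μ₀` of the weight `W` of the `d = 2` Jacobi-type
example. -/
noncomputable def mu0 (α β k : ℝ) : Matrix (Fin 2) (Fin 2) ℝ :=
  (Real.Gamma (α + 1) * Real.Gamma (β + 2) * (α + β - k + 2) /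
      Real.Gamma (α + β + 3)) •
    !![1, 0; 0, (α + 1) * (k + 1) / ((α + β + 3) * (β - k + 1))]

/-- The `(-1)`-st moment `μ₋₁` of the weight `W` of the `d = 2` Jacobi-type
example. -/
noncomputable def muM1 (α β k : ℝ) : Matrix (Fin 2) (Fin 2) ℝ :=
  (Real.Gamma α * Real.Gamma (β + 2) / Real.Gamma (α + β + 2)) •
    !![α + β - k + 1, -1;
       -1, ((α + 1) * (k + 1) * (α + β - k + 2) - k * (β - k + 1)) /
         ((α + β + 2) * (β - k + 1))]

lemma symm_fin_two (M : Matrix (Fin 2) (Fin 2) ℝ) :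
    Mᵀ = M ↔ M 0 1 = M 1 0 := by
  constructor
  · intro h
    have := congrFun (congrFun h 1) 0
    simpa [Matrix.transpose_apply] using this
  · intro h
    ext i j
    fin_cases i <;> fin_cases j <;> simp [Matrix.transpose_apply, h]

/-- `M = α₀⁻¹μ₀ − μ₋₁` is symmetric iff `s₁₂ = ((β−k+1)(α+β+3)/((α+1)(k+1))) s₂₁`. -/
theorem stmt_16 (α β k s11 s12 s21 s22 : ℝ) (hα : 0 < α) (hβ : β > -1)
    (hk : 0 < k) (hkβ : k < β + 1)
    (hinv : IsUnit (!![s11, s12; s21, s22] : Matrix (Fin 2) (Fin 2) ℝ)) :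
    ((!![s11, s12; s21, s22] : Matrix (Fin 2) (Fin 2) ℝ)⁻¹ * mu0 α β k -
        muM1 α β k)ᵀ =
      (!![s11, s12; s21, s22] : Matrix (Fin 2) (Fin 2) ℝ)⁻¹ * mu0 α β k -
        muM1 α β k ↔
    s12 = ((β - k + 1) * (α + β + 3) / ((α + 1) * (k + 1))) * s21 := by
  set A : Matrix (Fin 2) (Fin 2) ℝ := !![s11, s12; s21, s22] with hA
  have hdet : A.det ≠ 0 := by
    intro h0
    have := (Matrix.isUnit_iff_isUnit_det A).mp hinv
    rw [h0] at this
    simp at this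
  have hAinv : A⁻¹ = (A.det)⁻¹ • !![s22, -s12; -s21, s11] := by
    rw [Matrix.inv_def, Ring.inverse_eq_inv, hA, Matrix.adjugate_fin_two_of]
  rw [symm_fin_two]
  have hc : Real.Gamma (α + 1) * Real.Gamma (β + 2) * (α + β - k + 2) /
      Real.Gamma (α + β + 3) ≠ 0 := by
    have h1 := Real.Gamma_pos_of_pos (by linarith : (0:ℝ) < α + 1)
    have h2 := Real.Gamma_pos_of_pos (by linarith : (0:ℝ) < β + 2)
    have h3 := Real.Gamma_pos_of_pos (by linarith : (0:ℝ) < α + β + 3)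
    have h8 : (0:ℝ) < α + β - k + 2 := by linarith
    positivity
  have h4 : (α:ℝ) + 1 ≠ 0 := by linarith
  have h5 : (k:ℝ) + 1 ≠ 0 := by linarith
  have h6 : (α:ℝ) + β + 3 ≠ 0 := by linarith
  have h7 : β - k + 1 ≠ 0 := by linarith
  set c := Real.Gamma (α + 1) * Real.Gamma (β + 2) * (α + β - k + 2) /
        Real.Gamma (α + β + 3) with hcdef
  set g := Real.Gamma α * Real.Gamma (β + 2) / Real.Gamma (α + β + 2) with hgdef
  set d := (α + 1) * (k + 1) / ((α + β + 3) * (β - k + 1)) with hddef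
  have e01 : ((A⁻¹ * mu0 α β k - muM1 α β k) 0 1) =
      (A.det)⁻¹ * (-s12) * c * d + g := by
    simp [hAinv, mu0, muM1, Matrix.mul_apply, Fin.sum_univ_two, Matrix.smul_apply]
    try ring
  have e10 : ((A⁻¹ * mu0 α β k - muM1 α β k) 1 0) =
      (A.det)⁻¹ * (-s21) * c + g := by
    simp [hAinv, mu0, muM1, Matrix.mul_apply, Fin.sum_univ_two, Matrix.smul_apply]
    try ring
  rw [e01, e10, add_left_inj]
  have hdinv : (A.det)⁻¹ ≠ 0 := inv_ne_zero hdet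
  have hne : (A.det)⁻¹ * c ≠ 0 := mul_ne_zero hdinv hc
  have key : (A.det)⁻¹ * (-s12) * c * d = (A.det)⁻¹ * (-s21) * c ↔ s12 * d = s21 := by
    constructor
    · intro h
      have h2 : ((A.det)⁻¹ * c) * (s12 * d) = ((A.det)⁻¹ * c) * s21 := by
        linear_combination -h
      exact mul_left_cancel₀ hne h2
    · intro h
      linear_combination (-((A.det)⁻¹ * c)) * h
  rw [key, hddef]
  constructor <;> intro h <;> field_simp at h ⊢ <;> linarith
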